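/- Any deterministic or randomized algorithm for RAO is Ω(min{C, n})-competitive, where C is the accuracy of the hints. Concretely: for the instance with T = 2, t_i = 2 and h_i = C for all i, where article k has rates c_k = (1, C) and all other articles have rates (1, 1), the hints are C-accurate, the optimal offline value is C + 1, and the expected value of any online algorithm in the random order model is at most (1/n)(C+1) + 2(1 − 1/n) ≤ (2/n + 2/C)·(C+1). -/

import Mathlib

/-- Reading one article online (see the RAO model): decisions based on the history of
previously observed articles and the observations from the current article. -/
def readSteps (A : List (List ℕ) → List ℕ → Bool) (hist : List (List ℕ)) (c : ℕ → ℕ) :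
    ℕ → List ℕ → List ℕ
  | 0, obs => obs
  | fuel + 1, obs =>
      if A hist obs then readSteps A hist c fuel (obs ++ [c (obs.length + 1)]) else obs

/-- Run the online algorithm `A` on a stream of articles (length, rate function) with
the given remaining time budget; returns the total information gained. -/
def runAlg (A : List (List ℕ) → List ℕ → Bool) :
    List (List ℕ) → ℕ → List (ℕ × (ℕ → ℕ)) → ℕ
  | _, _, [] => 0
  | hist, budget, (len, c) :: rest =>
      let obs := readSteps A hist c (min len budget) []
      obs.sum + runAlg A (hist ++ [obs]) (budget - obs.length) rest

/-! On a stream of articles whose first steps all show rate `1`, a deterministic algorithm sees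
the same observations whatever the order, until it reads the second step of some article. The
position of that article (`commitIndex`) is therefore fixed before the order is drawn; the run is
worth at most `1 + c 2` for the article `c` at that position, and at most `2` if there is none.
Under a uniformly random order the article at a fixed position is uniform, so the expected value
is at most the average of `1 + c 2`, namely `((C + 1) + 2 (n - 1)) / n`. -/

open Finset Equiv Nat

theorem Equiv.Perm.sum_comp_apply {α : Type*} [Fintype α] [DecidableEq α] (a : α) (f : α → ℕ) :
    ∑ σ : Perm α, f (σ a) = (Fintype.card α - 1)! * ∑ b, f b := by
  have hsymm (b : α) : ∑ σ : Perm α, f (σ b) = ∑ σ : Perm α, f (σ a) :=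
    Fintype.sum_equiv (Equiv.mulRight (swap a b)) _ _ (by simp)
  have hcard : Fintype.card α * ∑ σ : Perm α, f (σ a) = (Fintype.card α)! * ∑ b, f b :=
    calc Fintype.card α * ∑ σ : Perm α, f (σ a) = ∑ b, ∑ σ : Perm α, f (σ b) := by
          simp [hsymm]
      _ = ∑ σ : Perm α, ∑ b, f (σ b) := Finset.sum_comm
      _ = (Fintype.card α)! * ∑ b, f b := by simp [Equiv.sum_comp, Fintype.card_perm]
  have hpos : 0 < Fintype.card α := Fintype.card_pos_iff.mpr ⟨a⟩
  rw [← Nat.mul_factorial_pred hpos.ne', mul_assoc] at hcard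
  exact Nat.eq_of_mul_eq_mul_left hpos hcard

theorem Finset.sum_Icc_one_two {M : Type*} [AddCommMonoid M] (f : ℕ → M) :
    ∑ j ∈ Icc 1 2, f j = f 1 + f 2 := by
  rw [show Icc 1 2 = {1, 2} from rfl, sum_pair (by norm_num)]

section Online

variable (A : List (List ℕ) → List ℕ → Bool)

theorem runAlg_zero_budget : ∀ (hist : List (List ℕ)) (L : List (ℕ × (ℕ → ℕ))),
    runAlg A hist 0 L = 0
  | _, [] => rfl
  | hist, (_, _) :: L => by simpa [runAlg, readSteps] using runAlg_zero_budget _ L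

theorem readSteps_two (hist : List (List ℕ)) (c : ℕ → ℕ) :
    readSteps A hist c 2 [] =
      if A hist [] then (if A hist [c 1] then [c 1, c 2] else [c 1]) else [] := by
  by_cases h : A hist [] <;> by_cases h' : A hist [c 1] <;> simp [readSteps, h, h']

theorem runAlg_budget_one_le : ∀ (hist : List (List ℕ)) (L : List (ℕ × (ℕ → ℕ))),
    (∀ p ∈ L, p.2 1 ≤ 1) → runAlg A hist 1 L ≤ 1
  | _, [], _ => zero_le_one
  | hist, (len, c) :: L, hL => by
    have ih := runAlg_budget_one_le (hist ++ [[]]) L fun p hp => hL p (List.mem_cons_of_mem _ hp)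
    have hc : c 1 ≤ 1 := hL _ List.mem_cons_self
    obtain h | h : min len 1 = 0 ∨ min len 1 = 1 := by omega
    · simpa [runAlg, h, readSteps] using ih
    · by_cases hA : A hist [] <;> simp [runAlg, h, readSteps, hA, runAlg_zero_budget, hc, ih]

-- Reading a lone first step leaves budget `1`, after which no second step can be read.
def commitIndex : List (List ℕ) → ℕ → Option ℕ
  | _, 0 => none
  | hist, m + 1 =>
      if A hist [] then (if A hist [1] then some 0 else none)
      else (commitIndex (hist ++ [[]]) m).map (· + 1)

theorem commitIndex_lt : ∀ {hist : List (List ℕ)} {m r : ℕ}, commitIndex A hist m = some r → r < m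
  | _, 0, _, h => by simp [commitIndex] at h
  | hist, m + 1, r, h => by
    by_cases hA : A hist [] <;> by_cases hA' : A hist [1] <;>
      simp only [commitIndex, hA, hA', if_true, if_false, reduceCtorEq, Option.some.injEq,
        Option.map_eq_some_iff, Bool.false_eq_true] at h
    · omega
    all_goals obtain ⟨r, hr, rfl⟩ := h; have := commitIndex_lt hr; omega

theorem runAlg_le_of_commitIndex {b : ℕ} (hb : 1 ≤ b) :
    ∀ (hist : List (List ℕ)) (L : List (ℕ × (ℕ → ℕ))), (∀ p ∈ L, 2 ≤ p.1 ∧ p.2 1 = 1) →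
      (∀ r (hr : r < L.length), commitIndex A hist L.length = some r → L[r].2 2 ≤ b) →
      runAlg A hist 2 L ≤ 1 + b
  | _, [], _, _ => by simp [runAlg]
  | hist, (len, c) :: L, hL, hcommit => by
    obtain ⟨hlen, hc1⟩ : 2 ≤ len ∧ c 1 = 1 := hL _ List.mem_cons_self
    have hL' : ∀ p ∈ L, 2 ≤ p.1 ∧ p.2 1 = 1 := fun p hp => hL p (List.mem_cons_of_mem _ hp)
    have hmin : min len 2 = 2 := by omega
    by_cases hA : A hist []
    · by_cases hA' : A hist [1]
      · have := hcommit 0 (by simp) (by simp [commitIndex, hA, hA'])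
        simp [runAlg, hmin, readSteps_two, hc1, hA, hA', runAlg_zero_budget] at this ⊢
        omega
      · have := runAlg_budget_one_le A (hist ++ [[1]]) L fun p hp => (hL' p hp).2.le
        simp [runAlg, hmin, readSteps_two, hc1, hA, hA']
        omega
    · have ih := runAlg_le_of_commitIndex hb (hist ++ [[]]) L hL' fun r hr h =>
        hcommit (r + 1) (by simpa using hr) (by simp [commitIndex, hA, h])
      simpa [runAlg, hmin, readSteps_two, hA] using ih

theorem sum_runAlg_perm_le {n : ℕ} (hn : 1 ≤ n) (art : Fin n → ℕ → ℕ)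
    (h1 : ∀ i, art i 1 = 1) (h2 : ∀ i, 1 ≤ art i 2) :
    ∑ π : Perm (Fin n), runAlg A [] 2 (List.ofFn fun r => (2, art (π r)))
      ≤ (n - 1)! * ∑ i, (1 + art i 2) := by
  obtain ⟨a, ha⟩ : ∃ a : Fin n, ∀ r, commitIndex A [] n = some r → r = a := by
    cases h : commitIndex A [] n with
    | none => exact ⟨⟨0, hn⟩, by simp⟩
    | some r => exact ⟨⟨r, commitIndex_lt A h⟩, by simp⟩
  calc ∑ π : Perm (Fin n), runAlg A [] 2 (List.ofFn fun r => (2, art (π r)))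
      ≤ ∑ π : Perm (Fin n), (1 + art (π a) 2) := by
        refine sum_le_sum fun π _ => runAlg_le_of_commitIndex A (h2 _) _ _ (by simp [h1]) ?_
        intro r hr h
        obtain rfl := ha r (by simpa using h)
        simp
    _ = (n - 1)! * ∑ i, (1 + art i 2) := by
        simpa using Perm.sum_comp_apply a fun i => 1 + art i 2

end Online

section Instance

variable {n : ℕ} (k : Fin n) (C : ℕ)

def spikeRates (i : Fin n) : ℕ → ℕ :=
  if i = k then fun j => if j = 2 then C else 1 else fun _ => 1

variable {k C}

theorem spikeRates_apply_one (i : Fin n) : spikeRates k C i 1 = 1 := by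
  by_cases hi : i = k <;> simp [spikeRates, hi]

theorem one_le_spikeRates_apply_two (hC : 1 ≤ C) (i : Fin n) : 1 ≤ spikeRates k C i 2 := by
  by_cases hi : i = k <;> simp [spikeRates, hi, hC]

theorem sum_Icc_spikeRates_le (i : Fin n) (t : ℕ) :
    ∑ j ∈ Icc 1 t, spikeRates k C i j ≤ t + if i = k then C - 1 else 0 := by
  by_cases hi : i = k
  · subst hi
    calc ∑ j ∈ Icc 1 t, spikeRates i C i j
        ≤ ∑ j ∈ Icc 1 t, (1 + if j = 2 then C - 1 else 0) :=
          sum_le_sum fun j _ => by by_cases hj : j = 2 <;> simp [spikeRates, hj]; omega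
      _ = t + if 2 ∈ Icc 1 t then C - 1 else 0 := by simp [sum_add_distrib]
      _ ≤ t + if i = i then C - 1 else 0 := by rw [if_pos rfl]; split_ifs <;> omega
  · simp [spikeRates, hi]

theorem sum_sum_Icc_spikeRates_le (hC : 1 ≤ C) (τ : Fin n → ℕ) (hτ : ∑ i, τ i ≤ 2) :
    ∑ i, ∑ j ∈ Icc 1 (τ i), spikeRates k C i j ≤ C + 1 :=
  calc ∑ i, ∑ j ∈ Icc 1 (τ i), spikeRates k C i j
      ≤ ∑ i, (τ i + if i = k then C - 1 else 0) := sum_le_sum fun i _ => sum_Icc_spikeRates_le i _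
    _ = ∑ i, τ i + (C - 1) := by simp [sum_add_distrib]
    _ ≤ C + 1 := by omega

theorem sum_sum_Icc_spikeRates_single :
    ∑ i, ∑ j ∈ Icc 1 ((Pi.single k 2 : Fin n → ℕ) i), spikeRates k C i j = C + 1 := by
  rw [sum_eq_single k (fun i _ hi => by simp [hi]) (by simp)]
  simp [sum_Icc_one_two, spikeRates, add_comm]

theorem sum_one_add_spikeRates_two :
    ∑ i, (1 + spikeRates k C i 2) = C + 1 + 2 * (n - 1) := by
  rw [← add_sum_erase _ _ (mem_univ k), sum_congr rfl fun i hi =>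
    show 1 + spikeRates k C i 2 = 2 by simp [spikeRates, ne_of_mem_erase hi]]
  simp [spikeRates, card_erase_of_mem, add_comm, mul_comm]

end Instance

/-- Any algorithm for RAO is `Ω(min{C, n})`-competitive, where `C` is
the accuracy of the hints.  Instance: `T = 2`, `t i = 2`, `h i = C` for all `i`;
article `k` has rates `(1, C)`, all others `(1, 1)`.  Then the hints are `C`-accurate
(`h i · t i ≤ C · Σ_j c i j`), the offline optimum is `C + 1`, and every
(deterministic) online algorithm has expected value over the uniformly random order at
most `(1/n)(C+1) + 2(1 - 1/n)`, i.e. summed over all `n!` orders, at most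
`(n-1)!·((C+1) + 2(n-1))`. -/
theorem accuracy_lower_bound (n C : ℕ) (hn : 1 ≤ n) (hC : 1 ≤ C)
    (k : Fin n) (art : Fin n → ℕ → ℕ)
    (hart : art = fun i : Fin n =>
      if i = k then (fun j => if j = 2 then C else 1) else (fun _ => 1)) :
    -- the hints h i = C are C-accurate:  h i * t i ≤ C * Σ_{j=1}^{t i} c i j
    ((∀ i, C * 2 ≤ C * ∑ j ∈ Finset.Icc 1 2, art i j) ∧
    -- the offline optimum is C + 1
    (∃ τ : Fin n → ℕ, (∀ i, τ i ≤ 2) ∧ (∑ i, τ i ≤ 2) ∧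
        (∑ i, ∑ j ∈ Finset.Icc 1 (τ i), art i j) = C + 1) ∧
    (∀ τ : Fin n → ℕ, (∀ i, τ i ≤ 2) → (∑ i, τ i ≤ 2) →
        (∑ i, ∑ j ∈ Finset.Icc 1 (τ i), art i j) ≤ C + 1) ∧
    -- any online algorithm is bad in expectation over the random order
    (∀ A : List (List ℕ) → List ℕ → Bool,
        ∑ π : Equiv.Perm (Fin n),
            runAlg A [] 2 (List.ofFn fun r => (2, art (π r)))
          ≤ Nat.factorial (n - 1) * ((C + 1) + 2 * (n - 1)))) := by
  obtain rfl : art = spikeRates k C := hart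
  refine ⟨fun i => ?_, ⟨Pi.single k 2, fun i => ?_, by simp, sum_sum_Icc_spikeRates_single⟩,
    fun τ _ hτ => sum_sum_Icc_spikeRates_le hC τ hτ, fun A => ?_⟩
  · rw [sum_Icc_one_two, spikeRates_apply_one]
    have := one_le_spikeRates_apply_two (k := k) hC i
    gcongr
    omega
  · by_cases hi : i = k <;> simp [hi]
  · rw [← sum_one_add_spikeRates_two]
    exact sum_runAlg_perm_le A hn _ spikeRates_apply_one (one_le_spikeRates_apply_two hC)
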